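/- arXiv:2002.11318 — 2 statements merged into one kernel-verified Lean document; each statement's English description precedes it below -/
import Mathlib

section
/- With the distribution of Theorem setup (Y uniform on {-1,1}; X_0 | Y=y equal to y with probability p ≥ 1/2 and -y otherwise; X_{2t-1}|Y=y ~ N(3y/√d,1), X_{2t}|Y=y ~ N(-3y/√d,1) independent; adversarial perturbation A flipping the Gaussian block means as defined), for any classifier f : ℝ^{2d+1} → {-1,1}: P(f(X + A(X)) ≠ Y) ≥ ((1-p)/p) · P(f(X) = Y). -/
open MeasureTheory ProbabilityTheory ENNReal

/-- Law of X₀ given Y = y: equals y with probability p and -y with probability 1-p. -/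
noncomputable def bern (p : ℝ) (y : ℝ) : MeasureTheory.Measure ℝ :=
  ENNReal.ofReal p • MeasureTheory.Measure.dirac y +
    ENNReal.ofReal (1 - p) • MeasureTheory.Measure.dirac (-y)

/-- Conditional law of X = (X₀, X₁, …, X_{2d}) given Y = y. -/
noncomputable def condLaw (d : ℕ) (p : ℝ) (y : ℝ) :
    MeasureTheory.Measure (Fin (2 * d + 1) → ℝ) :=
  MeasureTheory.Measure.pi (fun i =>
    if i.val = 0 then bern p y
    else if i.val % 2 = 1 then ProbabilityTheory.gaussianReal (3 * y / Real.sqrt d) 1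
    else ProbabilityTheory.gaussianReal (-3 * y / Real.sqrt d) 1)

/-- Joint law of (X, Y), with Y uniform on {-1, 1}. -/
noncomputable def jointLaw (d : ℕ) (p : ℝ) :
    MeasureTheory.Measure ((Fin (2 * d + 1) → ℝ) × ℝ) :=
  (2⁻¹ : ℝ≥0∞) • (condLaw d p 1).map (fun x => (x, (1 : ℝ))) +
    (2⁻¹ : ℝ≥0∞) • (condLaw d p (-1)).map (fun x => (x, (-1 : ℝ)))

/-- The adversarial perturbation A(x) (depending only on the true label y). -/
noncomputable def pert (d : ℕ) (y : ℝ) : Fin (2 * d + 1) → ℝ := fun i =>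
  if i.val = 0 then 0
  else if i.val % 2 = 1 then -6 * y / Real.sqrt d
  else 6 * y / Real.sqrt d

/-- The index permutation fixing 0 and swapping each pair (2t-1, 2t). -/
def swapIdx (d : ℕ) (i : Fin (2 * d + 1)) : Fin (2 * d + 1) :=
  if h0 : i.val = 0 then i
  else if h1 : i.val % 2 = 1 then ⟨i.val + 1, by have := i.isLt; omega⟩
  else ⟨i.val - 1, by have := i.isLt; omega⟩

/-- The coordinate-pair swap on ℝ^{2d+1}. -/
def swapMap (d : ℕ) (x : Fin (2 * d + 1) → ℝ) : Fin (2 * d + 1) → ℝ :=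
  fun i => x (swapIdx d i)

/-- Law of (X + A(X), Y). -/
noncomputable def advLaw (d : ℕ) (p : ℝ) :
    MeasureTheory.Measure ((Fin (2 * d + 1) → ℝ) × ℝ) :=
  (jointLaw d p).map (fun q => (q.1 + pert d q.2, q.2))

/-- Law of (r(X), Y): with prob 1/2 identity, with prob 1/2 the pair swap. -/
noncomputable def rLaw (d : ℕ) (p : ℝ) :
    MeasureTheory.Measure ((Fin (2 * d + 1) → ℝ) × ℝ) :=
  (2⁻¹ : ℝ≥0∞) • jointLaw d p +
    (2⁻¹ : ℝ≥0∞) • (jointLaw d p).map (fun q => (swapMap d q.1, q.2))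

/-!
Given `Y = y`, adding `A(X)` moves every Gaussian mean from `±3y/√d` to `∓3y/√d` and leaves
`X₀` alone, so `X + A(X)` has the law of `X` given `-y` except that its first coordinate is
still distributed as `bern p y`. For `p ≥ 1/2` this Bernoulli law dominates `(1-p)/p` times
`bern p (-y)`, hence the law of `X + A(X)` given `y` dominates `(1-p)/p` times the law of `X`
given `-y`. A point that `f` labels `-y` is an error for the perturbed input with label `y`,
and averaging over `y = ±1` gives the bound.
-/

theorem MeasureTheory.Measure.smul_pi_le_pi {n : ℕ} {α : Fin (n + 1) → Type*}
    [∀ i, MeasurableSpace (α i)] {μ ν : ∀ i, Measure (α i)} [∀ i, SigmaFinite (μ i)]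
    [∀ i, SigmaFinite (ν i)] {c : ℝ≥0∞} (i : Fin (n + 1)) (hi : c • ν i ≤ μ i)
    (hne : ∀ j ≠ i, ν j = μ j) :
    c • Measure.pi ν ≤ Measure.pi μ := by
  have hrest :
      (Measure.pi fun j => ν (i.succAbove j)) = Measure.pi fun j => μ (i.succAbove j) := by
    congr 1 with j : 1
    exact hne _ (Fin.succAbove_ne i j)
  rw [← (measurePreserving_piFinSuccAbove ν i).symm.map_eq,
    ← (measurePreserving_piFinSuccAbove μ i).symm.map_eq, ← Measure.map_smul,
    ← Measure.prod_smul_left, hrest]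
  exact Measure.map_mono (Measure.prod_mono hi le_rfl) (MeasurableEquiv.measurable _)

instance (p y : ℝ) : IsFiniteMeasure (bern p y) :=
  ⟨by simp [bern, ENNReal.add_lt_top]⟩

noncomputable def condFactor (d : ℕ) (p y : ℝ) (i : Fin (2 * d + 1)) : Measure ℝ :=
  if i.val = 0 then bern p y
  else if i.val % 2 = 1 then gaussianReal (3 * y / Real.sqrt d) 1
  else gaussianReal (-3 * y / Real.sqrt d) 1

instance (d : ℕ) (p y : ℝ) (i : Fin (2 * d + 1)) : IsFiniteMeasure (condFactor d p y i) := by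
  unfold condFactor; split_ifs <;> infer_instance

theorem condLaw_eq_pi (d : ℕ) (p y : ℝ) : condLaw d p y = Measure.pi (condFactor d p y) := rfl

theorem smul_bern_neg_le_bern {p : ℝ} {c : ℝ≥0∞}
    (hp : c * ENNReal.ofReal p ≤ ENNReal.ofReal (1 - p))
    (hq : c * ENNReal.ofReal (1 - p) ≤ ENNReal.ofReal p) (y : ℝ) :
    c • bern p (-y) ≤ bern p y := by
  refine Measure.le_iff'.2 fun s => ?_
  simp only [bern, neg_neg, Measure.smul_apply, Measure.add_apply, smul_eq_mul, mul_add,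
    ← mul_assoc]
  rw [add_comm]
  gcongr

theorem map_condFactor_add_pert {d : ℕ} {i : Fin (2 * d + 1)} (hi : i ≠ 0) (p y : ℝ) :
    (condFactor d p y i).map (· + pert d y i) = condFactor d p (-y) i := by
  have hi : i.val ≠ 0 := fun h => hi (Fin.ext h)
  simp only [condFactor, pert, if_neg hi]
  split_ifs
  all_goals rw [gaussianReal_map_add_const]; congr 1; ring

theorem smul_condLaw_neg_le_map_add_pert (d : ℕ) {p : ℝ} {c : ℝ≥0∞}
    (hp : c * ENNReal.ofReal p ≤ ENNReal.ofReal (1 - p))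
    (hq : c * ENNReal.ofReal (1 - p) ≤ ENNReal.ofReal p) (y : ℝ) :
    c • condLaw d p (-y) ≤ (condLaw d p y).map (· + pert d y) := by
  have hcoord : (fun x => x + pert d y) = fun (x : Fin (2 * d + 1) → ℝ) i => x i + pert d y i :=
    rfl
  rw [condLaw_eq_pi, condLaw_eq_pi, hcoord,
    Measure.pi_map_pi fun i => (measurable_add_const _).aemeasurable]
  refine Measure.smul_pi_le_pi 0 ?_ fun i hi => (map_condFactor_add_pert hi p y).symm
  simpa [condFactor, pert] using smul_bern_neg_le_bern hp hq y

instance (d : ℕ) (p y : ℝ) : IsFiniteMeasure (condLaw d p y) := by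
  rw [condLaw_eq_pi]; infer_instance

instance (d : ℕ) (p : ℝ) : IsFiniteMeasure (jointLaw d p) :=
  ⟨by simp [jointLaw, ENNReal.add_lt_top, ENNReal.mul_lt_top, measure_lt_top]⟩

instance (d : ℕ) (p : ℝ) : IsFiniteMeasure (advLaw d p) := by
  unfold advLaw; infer_instance

theorem jointLaw_apply (d : ℕ) (p : ℝ) {S : Set ((Fin (2 * d + 1) → ℝ) × ℝ)}
    (hS : MeasurableSet S) :
    jointLaw d p S = 2⁻¹ * condLaw d p 1 ((fun x => (x, (1 : ℝ))) ⁻¹' S) +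
      2⁻¹ * condLaw d p (-1) ((fun x => (x, (-1 : ℝ))) ⁻¹' S) := by
  rw [jointLaw, Measure.add_apply, Measure.smul_apply, Measure.smul_apply,
    Measure.map_apply measurable_prodMk_right hS, Measure.map_apply measurable_prodMk_right hS]
  rfl

theorem advLaw_apply (d : ℕ) (p : ℝ) {S : Set ((Fin (2 * d + 1) → ℝ) × ℝ)}
    (hS : MeasurableSet S) :
    advLaw d p S =
      2⁻¹ * (condLaw d p 1).map (· + pert d 1) ((fun x => (x, (1 : ℝ))) ⁻¹' S) +
      2⁻¹ * (condLaw d p (-1)).map (· + pert d (-1)) ((fun x => (x, (-1 : ℝ))) ⁻¹' S) := by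
  have hpert : Measurable (pert d) :=
    measurable_pi_lambda _ fun i => by unfold pert; split_ifs <;> fun_prop
  have hg : Measurable fun q : (Fin (2 * d + 1) → ℝ) × ℝ => (q.1 + pert d q.2, q.2) := by
    fun_prop
  rw [advLaw, Measure.map_apply hg hS, jointLaw_apply d p (hg hS),
    Measure.map_apply (measurable_add_const _) (measurable_prodMk_right hS),
    Measure.map_apply (measurable_add_const _) (measurable_prodMk_right hS)]
  rfl

theorem smul_jointLaw_correct_le_advLaw_error (d : ℕ) {p : ℝ} {c : ℝ≥0∞}
    (hp : c * ENNReal.ofReal p ≤ ENNReal.ofReal (1 - p))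
    (hq : c * ENNReal.ofReal (1 - p) ≤ ENNReal.ofReal p)
    {f : (Fin (2 * d + 1) → ℝ) → ℝ} (hf : Measurable f) :
    c * jointLaw d p {q | f q.1 = q.2} ≤ advLaw d p {q | f q.1 ≠ q.2} := by
  have hcorrect : MeasurableSet {q : (Fin (2 * d + 1) → ℝ) × ℝ | f q.1 = q.2} :=
    measurableSet_eq_fun (hf.comp measurable_fst) measurable_snd
  have key : ∀ y : ℝ, y ≠ 0 → c * condLaw d p (-y) {x | f x = -y} ≤
      (condLaw d p y).map (· + pert d y) {x | f x ≠ y} := fun y hy =>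
    calc c * condLaw d p (-y) {x | f x = -y}
        ≤ (condLaw d p y).map (· + pert d y) {x | f x = -y} :=
          smul_condLaw_neg_le_map_add_pert d hp hq y _
      _ ≤ _ := measure_mono fun x (hx : f x = -y) (h : f x = y) => hy (by linarith)
  have key₁ := key 1 one_ne_zero
  have key₂ := key (-1) (by norm_num)
  rw [neg_neg] at key₂
  rw [jointLaw_apply d p hcorrect, advLaw_apply (S := {q | f q.1 ≠ q.2}) d p hcorrect.compl]
  calc c * (2⁻¹ * condLaw d p 1 {x | f x = 1} + 2⁻¹ * condLaw d p (-1) {x | f x = -1})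
      = 2⁻¹ * (c * condLaw d p (-1) {x | f x = -1}) +
          2⁻¹ * (c * condLaw d p 1 {x | f x = 1}) := by ring
    _ ≤ _ := by gcongr <;> assumption

theorem adversarial_error_lower_bound_general (d : ℕ) (p : ℝ)
    (hp0 : 1/2 ≤ p)
    (f : (Fin (2 * d + 1) → ℝ) → ℝ) (hf : Measurable f) :
    ((1 - p) / p) * (jointLaw d p {q | f q.1 = q.2}).toReal ≤
      (advLaw d p {q | f q.1 ≠ q.2}).toReal := by
  have hp : 0 < p := by linarith
  set c := ENNReal.ofReal (1 - p) / ENNReal.ofReal p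
  have hle : ENNReal.ofReal (1 - p) ≤ ENNReal.ofReal p := ENNReal.ofReal_le_ofReal (by linarith)
  have hcp : c * ENNReal.ofReal p = ENNReal.ofReal (1 - p) :=
    ENNReal.div_mul_cancel (by simpa using hp) ENNReal.ofReal_ne_top
  have hcq : c * ENNReal.ofReal (1 - p) ≤ ENNReal.ofReal p :=
    (mul_le_of_le_one_left' (ENNReal.div_le_of_le_mul (by simpa using hle))).trans hle
  have hc : (1 - p) / p ≤ c.toReal := by
    rw [ENNReal.toReal_div, ENNReal.toReal_ofReal hp.le, ENNReal.toReal_ofReal']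
    gcongr
    exact le_max_left _ _
  calc (1 - p) / p * (jointLaw d p {q | f q.1 = q.2}).toReal
      ≤ c.toReal * (jointLaw d p {q | f q.1 = q.2}).toReal := by gcongr
    _ = (c * jointLaw d p {q | f q.1 = q.2}).toReal := ENNReal.toReal_mul.symm
    _ ≤ (advLaw d p {q | f q.1 ≠ q.2}).toReal :=
        ENNReal.toReal_mono (measure_ne_top _ _)
          (smul_jointLaw_correct_le_advLaw_error d hcp.le hcq hf)

/-- Adversarial error is at least ((1-p)/p) times the clean accuracy:
P(f(X + A(X)) ≠ Y) ≥ ((1-p)/p) · P(f(X) = Y). -/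
theorem adversarial_error_lower_bound (d : ℕ) (hd : 1 ≤ d) (p : ℝ)
    (hp0 : 1/2 ≤ p) (hp1 : p ≤ 1)
    (f : (Fin (2 * d + 1) → ℝ) → ℝ) (hf : Measurable f)
    (hfval : ∀ x, f x = 1 ∨ f x = -1) :
    ((1 - p) / p) * (jointLaw d p {q | f q.1 = q.2}).toReal ≤
      (advLaw d p {q | f q.1 ≠ q.2}).toReal :=
  adversarial_error_lower_bound_general d p hp0 f hf
end

section
/- Under the trade-off theorem's distribution with 1/2 ≤ p < 1 - δ, for any classifier f : ℝ^{2d+1} → {-1,1}, if the adversarial accuracy P(f(X + A(X)) = Y) ≥ 1 - δ, then the randomized-rotation accuracy satisfies P(f(r(X)) = Y) ≤ p/(2(1-p)) - ((2p-1)/(2(1-p)))·(1-δ); in particular it is strictly less than 1 - δ. -/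
open MeasureTheory ProbabilityTheory ENNReal

/-! Given `Y = t` and `X₀ = s`, `X` has the product law `pinnedLaw d s t`, and both the adversarial
shift and the pair swap turn it into `pinnedLaw d s (-t)`. Hence `(X + A(X), Y)` and `(swap X, Y)`
have the same law, and the accuracy `R` under `r` is the mean of the clean accuracy `J` and the
adversarial accuracy `A`. The laws of `X` given `Y = ±1` are `p`-mixtures of the pinned laws, and
`(1 - p) J + p A` splits into two terms, each comparing a mixture with the one of swapped weights
on complementary events; each term is at most `p` because `(1 - p)² ≤ p²`. Solving
`(1 - p) J + p A ≤ p` for `(J + A) / 2` under `A ≥ 1 - δ` gives the bound. -/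

namespace MeasureTheory.Measure

variable {ι α : Type*} [Fintype ι] [MeasurableSpace α]

theorem pi_eq_smul_add_smul_of_eq_of_ne [DecidableEq ι] {μ μ₁ μ₂ : ι → Measure α}
    [∀ i, SigmaFinite (μ i)] [∀ i, SigmaFinite (μ₁ i)] [∀ i, SigmaFinite (μ₂ i)]
    (i₀ : ι) (a b : ℝ≥0∞) (h₀ : μ i₀ = a • μ₁ i₀ + b • μ₂ i₀)
    (h₁ : ∀ i ≠ i₀, μ₁ i = μ i) (h₂ : ∀ i ≠ i₀, μ₂ i = μ i) :
    Measure.pi μ = a • Measure.pi μ₁ + b • Measure.pi μ₂ := by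
  refine pi_eq fun A _ => ?_
  have hrest (ν : ι → Measure α) (hν : ∀ i ≠ i₀, ν i = μ i) :
      ∏ i ∈ Finset.univ.erase i₀, ν i (A i) = ∏ i ∈ Finset.univ.erase i₀, μ i (A i) :=
    Finset.prod_congr rfl fun i hi => by rw [hν i (Finset.ne_of_mem_erase hi)]
  simp only [add_apply, smul_apply, smul_eq_mul, pi_pi,
    ← Finset.mul_prod_erase Finset.univ _ (Finset.mem_univ i₀), hrest μ₁ h₁, hrest μ₂ h₂, h₀]
  ring

theorem pi_map_comp_equiv (μ : ι → Measure α) [∀ i, SigmaFinite (μ i)] (σ : ι ≃ ι) :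
    (Measure.pi μ).map (fun x => x ∘ σ) = Measure.pi fun i => μ (σ i) := by
  refine (pi_eq fun A hA => ?_).symm
  have hσ : Measurable fun x : ι → α => x ∘ σ :=
    measurable_pi_lambda _ fun _ => measurable_pi_apply _
  rw [map_apply hσ (.univ_pi hA)]
  have : (fun x : ι → α => x ∘ σ) ⁻¹' Set.univ.pi A = Set.univ.pi (fun j => A (σ.symm j)) := by
    ext x
    simp only [Set.mem_preimage, Set.mem_univ_pi, Function.comp_apply]
    exact ⟨fun h i => by simpa using h (σ.symm i), fun h i => by simpa using h (σ i)⟩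
  rw [this, pi_pi]
  exact (σ.prod_comp _).symm.trans (by simp)

end MeasureTheory.Measure

section Mixture

variable {α β : Type*} [MeasurableSpace α] [MeasurableSpace β]

instance (c : ℝ) (μ : Measure α) [IsFiniteMeasure μ] : IsFiniteMeasure (ENNReal.ofReal c • μ) :=
  μ.smul_finite ENNReal.ofReal_ne_top

noncomputable def mixture (p : ℝ) (μ ν : Measure α) : Measure α :=
  ENNReal.ofReal p • μ + ENNReal.ofReal (1 - p) • ν

instance (p : ℝ) (μ ν : Measure α) [IsFiniteMeasure μ] [IsFiniteMeasure ν] :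
    IsFiniteMeasure (mixture p μ ν) := by
  unfold mixture; infer_instance

theorem mixture_map {f : α → β} (hf : Measurable f) (p : ℝ) (μ ν : Measure α) :
    (mixture p μ ν).map f = mixture p (μ.map f) (ν.map f) := by
  simp only [mixture, Measure.map_add _ _ hf, Measure.map_smul]

theorem mixture_real_apply {p : ℝ} (hp0 : 0 ≤ p) (hp1 : p ≤ 1) (μ ν : Measure α)
    [IsFiniteMeasure μ] [IsFiniteMeasure ν] (s : Set α) :
    (mixture p μ ν).real s = p * μ.real s + (1 - p) * ν.real s := by
  rw [mixture, measureReal_add_apply, measureReal_ennreal_smul_apply,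
    measureReal_ennreal_smul_apply, ENNReal.toReal_ofReal hp0, ENNReal.toReal_ofReal (by linarith)]

/-- Weighting the two mixtures by `1 - p` and `p`, the `μ`-components contribute exactly
`p (1 - p)` whatever `s` is, and the `ν`-components at most `p²` because `(1 - p)² ≤ p²`. -/
theorem mul_mixture_real_add_mul_mixture_real_compl_le {p : ℝ} (hp0 : 1 / 2 ≤ p) (hp1 : p ≤ 1)
    (μ ν : Measure α) [IsProbabilityMeasure μ] [IsProbabilityMeasure ν] {s : Set α}
    (hs : MeasurableSet s) :
    (1 - p) * (mixture p μ ν).real s + p * (mixture p ν μ).real sᶜ ≤ p := by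
  rw [mixture_real_apply (by linarith) hp1, mixture_real_apply (by linarith) hp1,
    probReal_compl_eq_one_sub hs, probReal_compl_eq_one_sub hs]
  have hν0 : 0 ≤ ν.real s := measureReal_nonneg
  nlinarith [mul_nonneg (by linarith : (0 : ℝ) ≤ 2 * p - 1) hν0]

end Mixture

noncomputable def coordLaws (d : ℕ) (μ₀ : Measure ℝ) (t : ℝ) (i : Fin (2 * d + 1)) : Measure ℝ :=
  if i.val = 0 then μ₀
  else if i.val % 2 = 1 then gaussianReal (3 * t / Real.sqrt d) 1
  else gaussianReal (-3 * t / Real.sqrt d) 1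

instance (d : ℕ) (μ₀ : Measure ℝ) [IsFiniteMeasure μ₀] (t : ℝ) (i : Fin (2 * d + 1)) :
    IsFiniteMeasure (coordLaws d μ₀ t i) := by
  unfold coordLaws; split_ifs <;> infer_instance

instance (d : ℕ) (μ₀ : Measure ℝ) [IsProbabilityMeasure μ₀] (t : ℝ) (i : Fin (2 * d + 1)) :
    IsProbabilityMeasure (coordLaws d μ₀ t i) := by
  unfold coordLaws; split_ifs <;> infer_instance

/-- The law of `X` given `Y = t` and `X₀ = s`. -/
noncomputable def pinnedLaw (d : ℕ) (s t : ℝ) : Measure (Fin (2 * d + 1) → ℝ) :=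
  Measure.pi (coordLaws d (Measure.dirac s) t)

instance (d : ℕ) (s t : ℝ) : IsProbabilityMeasure (pinnedLaw d s t) := by
  unfold pinnedLaw; infer_instance

instance inst_s16 (p y : ℝ) : IsFiniteMeasure (bern p y) :=
  inferInstanceAs (IsFiniteMeasure (mixture p (Measure.dirac y) (Measure.dirac (-y))))

instance inst_s16_2 (d : ℕ) (p y : ℝ) : IsFiniteMeasure (condLaw d p y) :=
  inferInstanceAs (IsFiniteMeasure (Measure.pi (coordLaws d (bern p y) y)))

theorem condLaw_eq_mixture (d : ℕ) (p y : ℝ) :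
    condLaw d p y = mixture p (pinnedLaw d y y) (pinnedLaw d (-y) y) :=
  Measure.pi_eq_smul_add_smul_of_eq_of_ne (μ := coordLaws d (bern p y) y) 0 _ _
    (by simp [coordLaws, bern]) (fun i hi => by simp [coordLaws, hi])
    (fun i hi => by simp [coordLaws, hi])

theorem coordLaws_map_add_pert (d : ℕ) (μ₀ : Measure ℝ) (t : ℝ) (i : Fin (2 * d + 1)) :
    (coordLaws d μ₀ t i).map (· + pert d t i) = coordLaws d μ₀ (-t) i := by
  unfold coordLaws pert
  split_ifs
  · convert Measure.map_id' (μ := μ₀) using 2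
    exact add_zero _
  all_goals rw [gaussianReal_map_add_const]; congr 1; ring

theorem pinnedLaw_map_add_pert (d : ℕ) (s t : ℝ) :
    (pinnedLaw d s t).map (· + pert d t) = pinnedLaw d s (-t) := by
  rw [pinnedLaw, pinnedLaw, ← funext (coordLaws_map_add_pert d _ t)]
  exact Measure.pi_map_pi fun i => (measurable_add_const _).aemeasurable

theorem val_swapIdx (d : ℕ) (i : Fin (2 * d + 1)) :
    (swapIdx d i).val =
      if i.val = 0 then 0 else if i.val % 2 = 1 then i.val + 1 else i.val - 1 := by
  unfold swapIdx
  split_ifs <;> simp_all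

theorem swapIdx_involutive (d : ℕ) : Function.Involutive (swapIdx d) := fun i => by
  ext
  have := i.isLt
  simp only [val_swapIdx]
  split_ifs <;> first | contradiction | omega

theorem coordLaws_swapIdx (d : ℕ) (μ₀ : Measure ℝ) (t : ℝ) (i : Fin (2 * d + 1)) :
    coordLaws d μ₀ t (swapIdx d i) = coordLaws d μ₀ (-t) i := by
  simp only [coordLaws, val_swapIdx]
  split_ifs <;> first | rfl | contradiction | omega | (congr 1; ring)

theorem measurable_swapMap (d : ℕ) : Measurable (swapMap d) :=
  measurable_pi_lambda _ fun _ => measurable_pi_apply _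

theorem pinnedLaw_map_swapMap (d : ℕ) (s t : ℝ) :
    (pinnedLaw d s t).map (swapMap d) = pinnedLaw d s (-t) := by
  rw [pinnedLaw, pinnedLaw, ← funext (coordLaws_swapIdx d _ t)]
  exact Measure.pi_map_comp_equiv _ (swapIdx_involutive d).toPerm

section Labelled

variable {X : Type*} [MeasurableSpace X]

noncomputable def labelledLaw (ν₁ ν₂ : Measure X) : Measure (X × ℝ) :=
  (2⁻¹ : ℝ≥0∞) • ν₁.map (fun x => (x, (1 : ℝ))) + (2⁻¹ : ℝ≥0∞) • ν₂.map (fun x => (x, (-1 : ℝ)))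

instance (ν₁ ν₂ : Measure X) [IsFiniteMeasure ν₁] [IsFiniteMeasure ν₂] :
    IsFiniteMeasure (labelledLaw ν₁ ν₂) :=
  ⟨by simp [labelledLaw, ENNReal.mul_lt_top, measure_lt_top]⟩

theorem labelledLaw_map (ν₁ ν₂ : Measure X) {g : ℝ → X → X}
    (hg : Measurable fun q : X × ℝ => g q.2 q.1) (hg₁ : Measurable (g 1))
    (hg₂ : Measurable (g (-1))) :
    (labelledLaw ν₁ ν₂).map (fun q => (g q.2 q.1, q.2)) =
      labelledLaw (ν₁.map (g 1)) (ν₂.map (g (-1))) := by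
  have hG : Measurable fun q : X × ℝ => (g q.2 q.1, q.2) := hg.prodMk measurable_snd
  have hpair (c : ℝ) : Measurable fun x : X => (x, c) := measurable_id.prodMk measurable_const
  simp only [labelledLaw, Measure.map_add _ _ hG, Measure.map_smul,
    Measure.map_map hG (hpair _), Measure.map_map (hpair _) hg₁, Measure.map_map (hpair _) hg₂]
  rfl

theorem labelledLaw_real_setOf_eq (ν₁ ν₂ : Measure X) [IsFiniteMeasure ν₁] [IsFiniteMeasure ν₂]
    {f : X → ℝ} (hf : Measurable f) :
    (labelledLaw ν₁ ν₂).real {q | f q.1 = q.2} =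
      (ν₁.real {x | f x = 1} + ν₂.real {x | f x = -1}) / 2 := by
  have hE : MeasurableSet {q : X × ℝ | f q.1 = q.2} :=
    measurableSet_eq_fun (hf.comp measurable_fst) measurable_snd
  have hpair (c : ℝ) : Measurable fun x : X => (x, c) := measurable_id.prodMk measurable_const
  have hpre (c : ℝ) : (fun x : X => (x, c)) ⁻¹' {q | f q.1 = q.2} = {x | f x = c} := rfl
  rw [labelledLaw, measureReal_add_apply (by simp [ENNReal.mul_eq_top])
    (by simp [ENNReal.mul_eq_top]), measureReal_ennreal_smul_apply, measureReal_ennreal_smul_apply,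
    map_measureReal_apply (hpair _) hE, map_measureReal_apply (hpair _) hE, hpre, hpre]
  simp only [ENNReal.toReal_inv, ENNReal.toReal_ofNat]
  ring

end Labelled

section Accuracy

theorem jointLaw_eq_labelledLaw (d : ℕ) (p : ℝ) :
    jointLaw d p = labelledLaw (condLaw d p 1) (condLaw d p (-1)) := rfl

theorem condLaw_map_add_pert (d : ℕ) (p y : ℝ) :
    (condLaw d p y).map (· + pert d y) =
      mixture p (pinnedLaw d y (-y)) (pinnedLaw d (-y) (-y)) := by
  rw [condLaw_eq_mixture, mixture_map (measurable_add_const _), pinnedLaw_map_add_pert,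
    pinnedLaw_map_add_pert]

theorem condLaw_map_swapMap (d : ℕ) (p y : ℝ) :
    (condLaw d p y).map (swapMap d) = mixture p (pinnedLaw d y (-y)) (pinnedLaw d (-y) (-y)) := by
  rw [condLaw_eq_mixture, mixture_map (measurable_swapMap d), pinnedLaw_map_swapMap,
    pinnedLaw_map_swapMap]

theorem advLaw_eq_labelledLaw (d : ℕ) (p : ℝ) :
    advLaw d p = labelledLaw (mixture p (pinnedLaw d 1 (-1)) (pinnedLaw d (-1) (-1)))
      (mixture p (pinnedLaw d (-1) 1) (pinnedLaw d 1 1)) := by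
  have hpert : Measurable fun q : (Fin (2 * d + 1) → ℝ) × ℝ => q.1 + pert d q.2 :=
    measurable_fst.add (measurable_pi_lambda _ fun i => by
      unfold pert; split_ifs <;> fun_prop)
  rw [advLaw, jointLaw_eq_labelledLaw, labelledLaw_map _ _ (g := fun y x => x + pert d y) hpert
    (measurable_add_const _) (measurable_add_const _), condLaw_map_add_pert, condLaw_map_add_pert]
  simp only [neg_neg]

theorem jointLaw_map_swapMap (d : ℕ) (p : ℝ) :
    (jointLaw d p).map (fun q => (swapMap d q.1, q.2)) = advLaw d p := by
  rw [jointLaw_eq_labelledLaw, labelledLaw_map _ _ (g := fun _ => swapMap d)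
    ((measurable_swapMap d).comp measurable_fst) (measurable_swapMap d) (measurable_swapMap d),
    condLaw_map_swapMap, condLaw_map_swapMap, advLaw_eq_labelledLaw]
  simp only [neg_neg]

variable {d : ℕ} {f : (Fin (2 * d + 1) → ℝ) → ℝ}

theorem rLaw_real_setOf_eq (p : ℝ) :
    (rLaw d p).real {q | f q.1 = q.2} =
      ((jointLaw d p).real {q | f q.1 = q.2} + (advLaw d p).real {q | f q.1 = q.2}) / 2 := by
  have : IsFiniteMeasure (jointLaw d p) := by rw [jointLaw_eq_labelledLaw]; infer_instance
  have : IsFiniteMeasure (advLaw d p) := by rw [advLaw]; infer_instance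
  rw [rLaw, jointLaw_map_swapMap, measureReal_add_apply (by simp [ENNReal.mul_eq_top])
    (by simp [ENNReal.mul_eq_top]), measureReal_ennreal_smul_apply, measureReal_ennreal_smul_apply]
  simp only [ENNReal.toReal_inv, ENNReal.toReal_ofNat]
  ring

theorem one_sub_mul_jointLaw_real_add_mul_advLaw_real_le {p : ℝ} (hp0 : 1 / 2 ≤ p) (hp1 : p ≤ 1)
    (hf : Measurable f) (hfval : ∀ x, f x = 1 ∨ f x = -1) :
    (1 - p) * (jointLaw d p).real {q | f q.1 = q.2} + p * (advLaw d p).real {q | f q.1 = q.2}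
      ≤ p := by
  have hcompl : {x | f x = -1} = {x | f x = 1}ᶜ := by
    ext x; rcases hfval x with h | h <;> norm_num [h]
  have hS : MeasurableSet {x | f x = 1} := hf (measurableSet_singleton 1)
  have h₁ := mul_mixture_real_add_mul_mixture_real_compl_le hp0 hp1
    (pinnedLaw d 1 1) (pinnedLaw d (-1) 1) hS
  have h₂ := mul_mixture_real_add_mul_mixture_real_compl_le hp0 hp1
    (pinnedLaw d (-1) (-1)) (pinnedLaw d 1 (-1)) hS.compl
  rw [compl_compl, ← hcompl] at h₂
  rw [← hcompl] at h₁
  rw [jointLaw_eq_labelledLaw, advLaw_eq_labelledLaw, condLaw_eq_mixture, condLaw_eq_mixture,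
    labelledLaw_real_setOf_eq _ _ hf, labelledLaw_real_setOf_eq _ _ hf, neg_neg]
  linarith

end Accuracy

theorem tradeoff_bound {p δ J A : ℝ} (hp0 : 1 / 2 ≤ p) (hp1 : p < 1) (hpδ : p < 1 - δ)
    (hkey : (1 - p) * J + p * A ≤ p) (hA : 1 - δ ≤ A) :
    (J + A) / 2 ≤ p / (2 * (1 - p)) - ((2 * p - 1) / (2 * (1 - p))) * (1 - δ) ∧
      (J + A) / 2 < 1 - δ := by
  have h1p : 0 < 2 * (1 - p) := by linarith
  have hbound : p / (2 * (1 - p)) - ((2 * p - 1) / (2 * (1 - p))) * (1 - δ) =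
      (p - (2 * p - 1) * (1 - δ)) / (2 * (1 - p)) := by ring
  have hle : (J + A) / 2 ≤ (p - (2 * p - 1) * (1 - δ)) / (2 * (1 - p)) := by
    rw [le_div_iff₀ h1p]
    nlinarith [mul_le_mul_of_nonneg_left hA (by linarith : (0 : ℝ) ≤ 2 * p - 1)]
  have hlt : (p - (2 * p - 1) * (1 - δ)) / (2 * (1 - p)) < 1 - δ := by
    rw [div_lt_iff₀ h1p]
    nlinarith
  exact ⟨hbound ▸ hle, hle.trans_lt hlt⟩

theorem quantitative_tradeoff_general (d : ℕ) (p δ : ℝ)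
    (hp0 : 1/2 ≤ p) (hδ0 : 0 < δ) (hpδ : p < 1 - δ)
    (f : (Fin (2 * d + 1) → ℝ) → ℝ) (hf : Measurable f)
    (hfval : ∀ x, f x = 1 ∨ f x = -1)
    (hadv : 1 - δ ≤ (advLaw d p {q | f q.1 = q.2}).toReal) :
    (rLaw d p {q | f q.1 = q.2}).toReal ≤
        p / (2 * (1 - p)) - ((2 * p - 1) / (2 * (1 - p))) * (1 - δ) ∧
      (rLaw d p {q | f q.1 = q.2}).toReal < 1 - δ := by
  have hp1 : p < 1 := by linarith
  simp only [← measureReal_def, rLaw_real_setOf_eq] at hadv ⊢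
  exact tradeoff_bound hp0 hp1 hpδ
    (one_sub_mul_jointLaw_real_add_mul_advLaw_real_le hp0 hp1.le hf hfval) hadv

/-- Quantitative trade-off: if the adversarial accuracy is at least 1 - δ and
1/2 ≤ p < 1 - δ, then the randomized-rotation accuracy is at most
p/(2(1-p)) - ((2p-1)/(2(1-p)))·(1-δ), which is strictly less than 1 - δ. -/
theorem quantitative_tradeoff (d : ℕ) (hd : 1 ≤ d) (p δ : ℝ)
    (hp0 : 1/2 ≤ p) (hδ0 : 0 < δ) (hδ1 : δ ≤ 1/2) (hpδ : p < 1 - δ)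
    (f : (Fin (2 * d + 1) → ℝ) → ℝ) (hf : Measurable f)
    (hfval : ∀ x, f x = 1 ∨ f x = -1)
    (hadv : 1 - δ ≤ (advLaw d p {q | f q.1 = q.2}).toReal) :
    (rLaw d p {q | f q.1 = q.2}).toReal ≤
        p / (2 * (1 - p)) - ((2 * p - 1) / (2 * (1 - p))) * (1 - δ) ∧
      (rLaw d p {q | f q.1 = q.2}).toReal < 1 - δ :=
  quantitative_tradeoff_general d p δ hp0 hδ0 hpδ f hf hfval hadv
end
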